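/- arXiv:math/0607739 — 4 statements merged into one kernel-verified Lean document; each statement's English description precedes it below -/
import Mathlib

section
/- Let (G,⊕) be a Smarandache loop such that for all f,g ∈ G there exists a nontrivial associative subloop (S,⊕) of (G,⊕) with f,g ∈ S (i.e., all f,g-principal isotopes of (G,⊕) are Smarandache f,g-principal isotopes). Then (G,⊕) is universal: every loop isotopic to (G,⊕) is a Smarandache loop. (Theorem 1.5, forward direction) -/
universe u

/-- A loop: a quasigroup with a two-sided identity. Translations
`fun x => mul a x` (left) and `fun x => mul x a` (right) are bijections. -/
structure LoopStr (G : Type u) where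
  mul : G → G → G
  one : G
  one_mul : ∀ x, mul one x = x
  mul_one : ∀ x, mul x one = x
  leftBij : ∀ a, Function.Bijective fun x => mul a x
  rightBij : ∀ a, Function.Bijective fun x => mul x a

namespace LoopStr

variable {G : Type u}

/-- The left translation `L_a : x ↦ a ⊕ x` as a bijection of `G`. -/
noncomputable def L (M : LoopStr G) (a : G) : G ≃ G :=
  Equiv.ofBijective _ (M.leftBij a)

/-- The right translation `R_a : x ↦ x ⊕ a` as a bijection of `G`. -/
noncomputable def R (M : LoopStr G) (a : G) : G ≃ G :=
  Equiv.ofBijective _ (M.rightBij a)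

@[simp] theorem L_apply (M : LoopStr G) (a x : G) : M.L a x = M.mul a x := rfl
@[simp] theorem R_apply (M : LoopStr G) (a x : G) : M.R a x = M.mul x a := rfl

/-- The right inverse `x^ρ`, characterized by `x ⊕ x^ρ = e`. -/
noncomputable def rinv (M : LoopStr G) (x : G) : G := (M.L x).symm M.one

/-- The left inverse `x^λ`, characterized by `x^λ ⊕ x = e`. -/
noncomputable def linv (M : LoopStr G) (x : G) : G := (M.R x).symm M.one

/-- `M` and `N` are isotopic: there are bijections `A, B, C` with
`(xA) ⊗ (yB) = (x ⊕ y)C` for all `x, y`. -/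
def Isotopic (M : LoopStr G) {H : Type u} (N : LoopStr H) : Prop :=
  ∃ A B C : G ≃ H, ∀ x y, N.mul (A x) (B y) = C (M.mul x y)

/-- The multiplication `x ∘ y = (x R_g⁻¹) ⊕ (y L_f⁻¹)` of the
`f,g`-principal isotope. -/
noncomputable def pMul (M : LoopStr G) (f g x y : G) : G :=
  M.mul ((M.R g).symm x) ((M.L f).symm y)

/-- `S` is a subloop of `(G, ⊕)`: it contains the identity, is closed under
multiplication, and for `a ∈ S` the translations restrict to bijections of `S`. -/
structure IsSubloop (M : LoopStr G) (S : Set G) : Prop where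
  one_mem : M.one ∈ S
  mul_mem : ∀ {x y}, x ∈ S → y ∈ S → M.mul x y ∈ S
  left_bijOn : ∀ {a}, a ∈ S → Set.BijOn (fun x => M.mul a x) S S
  right_bijOn : ∀ {a}, a ∈ S → Set.BijOn (fun x => M.mul x a) S S

/-- A nontrivial (sub)set: more than one element, and a proper subset. -/
def NontrivialSub (S : Set G) : Prop := S.Nontrivial ∧ S ≠ Set.univ

/-- `(U, V, W)` is an autotopism of the subloop `(S, ⊕)`: each map restricts to a
bijection of `S` and `(xU) ⊕ (yV) = (x ⊕ y)W` for all `x, y ∈ S`. -/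
def IsAutotopismOn (M : LoopStr G) (S : Set G) (U V W : G → G) : Prop :=
  Set.BijOn U S S ∧ Set.BijOn V S S ∧ Set.BijOn W S S ∧
    ∀ x ∈ S, ∀ y ∈ S, M.mul (U x) (V y) = W (M.mul x y)

end LoopStr

open LoopStr

variable {G : Type u}

/-- The subset `S` is associative for `M`. -/
def AssocOn (M : LoopStr G) (S : Set G) : Prop :=
  ∀ x ∈ S, ∀ y ∈ S, ∀ z ∈ S, M.mul (M.mul x y) z = M.mul x (M.mul y z)

/-- A Smarandache associative (group) loop `(G, ⊕)` such that for all `f, g ∈ G` there is a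
nontrivial associative (group) subloop containing `f` and `g` (i.e. all of whose
`f,g`-principal isotopes are Smarandache `f,g`-principal isotopes) is universal:
every loop isotopic to it is a Smarandache associative (group) loop. -/
theorem smarandache_loop_universal (M : LoopStr G)
    (hSm : ∃ S : Set G, M.IsSubloop S ∧ NontrivialSub S ∧ AssocOn M S)
    (h : ∀ f g : G, ∃ S : Set G, M.IsSubloop S ∧ NontrivialSub S ∧ AssocOn M S ∧ f ∈ S ∧ g ∈ S) :
    ∀ (H : Type u) (N : LoopStr H), M.Isotopic N →
      ∃ S : Set H, N.IsSubloop S ∧ NontrivialSub S ∧ AssocOn N S := by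
  rintro H N ⟨A, B, C, hABC⟩
  set f := A.symm N.one with hf
  set g := B.symm N.one with hg
  obtain ⟨S, hS, ⟨hSnt, hSne⟩, hSa, hfS, hgS⟩ := h f g
  have hA : ∀ x, A x = C (M.mul x g) := by
    intro x
    have hx := hABC x g
    rw [hg, B.apply_symm_apply, N.mul_one] at hx
    exact hx
  have hB : ∀ y, B y = C (M.mul f y) := by
    intro y
    have hy := hABC f y
    rw [hf, A.apply_symm_apply, N.one_mul] at hy
    exact hy
  have hAsym : ∀ u, A.symm (C u) = (M.R g).symm u := by
    intro u
    rw [Equiv.symm_apply_eq, hA ((M.R g).symm u)]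
    congr 1
    exact ((M.R g).apply_symm_apply u).symm
  have hBsym : ∀ u, B.symm (C u) = (M.L f).symm u := by
    intro u
    rw [Equiv.symm_apply_eq, hB ((M.L f).symm u)]
    congr 1
    exact ((M.L f).apply_symm_apply u).symm
  -- principal isotope multiplication
  set p : G → G → G := fun x y => M.mul ((M.R g).symm x) ((M.L f).symm y) with hp
  have key : ∀ x y, N.mul (C x) (C y) = C (p x y) := by
    intro x y
    conv_lhs => rw [← A.apply_symm_apply (C x), ← B.apply_symm_apply (C y)]
    rw [hABC, hAsym, hBsym]
  -- division maps preserve S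
  have hr : ∀ {x}, x ∈ S → (M.R g).symm x ∈ S := by
    intro x hx
    obtain ⟨u, hu, hux⟩ := (hS.right_bijOn hgS).surjOn hx
    have : (M.R g).symm x = u := by rw [Equiv.symm_apply_eq]; exact hux.symm
    rwa [this]
  have hl : ∀ {x}, x ∈ S → (M.L f).symm x ∈ S := by
    intro x hx
    obtain ⟨u, hu, hux⟩ := (hS.left_bijOn hfS).surjOn hx
    have : (M.L f).symm x = u := by rw [Equiv.symm_apply_eq]; exact hux.symm
    rwa [this]
  have hpS : ∀ {x y}, x ∈ S → y ∈ S → p x y ∈ S := fun hx hy =>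
    hS.mul_mem (hr hx) (hl hy)
  have hRmul : ∀ {a b}, a ∈ S → b ∈ S →
      (M.R g).symm (M.mul a b) = M.mul a ((M.R g).symm b) := by
    intro a b ha hb
    rw [Equiv.symm_apply_eq]
    show M.mul a b = M.mul (M.mul a ((M.R g).symm b)) g
    rw [hSa _ ha _ (hr hb) _ hgS]
    congr 1
    exact ((M.R g).apply_symm_apply b).symm
  have hLmul : ∀ {a b}, a ∈ S → b ∈ S →
      (M.L f).symm (M.mul a b) = M.mul ((M.L f).symm a) b := by
    intro a b ha hb
    rw [Equiv.symm_apply_eq]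
    show M.mul a b = M.mul f (M.mul ((M.L f).symm a) b)
    rw [← hSa _ hfS _ (hl ha) _ hb]
    congr 1
    exact ((M.L f).apply_symm_apply a).symm
  have hrl : ∀ {a}, a ∈ S → (M.R g).symm ((M.L f).symm a) = (M.L f).symm ((M.R g).symm a) := by
    intro a ha
    set u := (M.R g).symm ((M.L f).symm a) with hu
    set v := (M.L f).symm ((M.R g).symm a) with hv
    have huS : u ∈ S := hr (hl ha)
    have hvS : v ∈ S := hl (hr ha)
    have h1 : M.mul (M.mul f u) g = a := by
      rw [hSa _ hfS _ huS _ hgS]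
      have : M.mul u g = (M.L f).symm a := (M.R g).apply_symm_apply _
      rw [this]
      exact (M.L f).apply_symm_apply a
    have h2 : M.mul (M.mul f v) g = a := by
      have : M.mul f v = (M.R g).symm a := (M.L f).apply_symm_apply _
      rw [this]
      exact (M.R g).apply_symm_apply a
    have h3 : M.mul f u = M.mul f v :=
      (M.rightBij g).1 (h1.trans h2.symm)
    exact (M.leftBij f).1 h3
  have p_assoc : ∀ {x y z}, x ∈ S → y ∈ S → z ∈ S → p (p x y) z = p x (p y z) := by
    intro x y z hx hy hz
    show M.mul ((M.R g).symm (M.mul ((M.R g).symm x) ((M.L f).symm y))) ((M.L f).symm z)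
      = M.mul ((M.R g).symm x) ((M.L f).symm (M.mul ((M.R g).symm y) ((M.L f).symm z)))
    rw [hRmul (hr hx) (hl hy), hLmul (hr hy) (hl hz), hrl hy,
      hSa _ (hr hx) _ (hl (hr hy)) _ (hl hz)]
  -- identity element
  have hone : C (M.mul f g) = N.one := by
    have hid : ∀ y, p (M.mul f g) y = y := by
      intro y
      show M.mul ((M.R g).symm (M.mul f g)) ((M.L f).symm y) = y
      have : (M.R g).symm (M.mul f g) = f := by
        rw [Equiv.symm_apply_eq]; rfl
      rw [this]
      exact (M.L f).apply_symm_apply y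
    have h1 := key (M.mul f g) (C.symm N.one)
    rw [hid, C.apply_symm_apply, N.mul_one] at h1
    exact h1
  refine ⟨C '' S, ⟨⟨M.mul f g, hS.mul_mem hfS hgS, hone⟩, ?_, ?_, ?_⟩, ⟨?_, ?_⟩, ?_⟩
  · rintro _ _ ⟨a, ha, rfl⟩ ⟨b, hb, rfl⟩
    rw [key]
    exact ⟨p a b, hpS ha hb, rfl⟩
  · rintro _ ⟨s, hsS, rfl⟩
    refine ⟨?_, ((N.leftBij (C s)).1).injOn, ?_⟩
    · rintro _ ⟨t, htS, rfl⟩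
      show N.mul (C s) (C t) ∈ _
      rw [key]
      exact ⟨p s t, hpS hsS htS, rfl⟩
    · rintro _ ⟨u, huS, rfl⟩
      obtain ⟨v, hvS, hvu⟩ := (hS.left_bijOn (hr hsS)).surjOn huS
      refine ⟨C (M.mul f v), ⟨M.mul f v, hS.mul_mem hfS hvS, rfl⟩, ?_⟩
      show N.mul (C s) (C (M.mul f v)) = C u
      rw [key]
      congr 1
      show M.mul ((M.R g).symm s) ((M.L f).symm (M.mul f v)) = u
      have : (M.L f).symm (M.mul f v) = v := (M.L f).symm_apply_apply v
      rw [this]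
      exact hvu
  · rintro _ ⟨s, hsS, rfl⟩
    refine ⟨?_, ((N.rightBij (C s)).1).injOn, ?_⟩
    · rintro _ ⟨t, htS, rfl⟩
      show N.mul (C t) (C s) ∈ _
      rw [key]
      exact ⟨p t s, hpS htS hsS, rfl⟩
    · rintro _ ⟨u, huS, rfl⟩
      obtain ⟨v, hvS, hvu⟩ := (hS.right_bijOn (hl hsS)).surjOn huS
      refine ⟨C (M.mul v g), ⟨M.mul v g, hS.mul_mem hvS hgS, rfl⟩, ?_⟩
      show N.mul (C (M.mul v g)) (C s) = C u
      rw [key]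
      congr 1
      show M.mul ((M.R g).symm (M.mul v g)) ((M.L f).symm s) = u
      have : (M.R g).symm (M.mul v g) = v := (M.R g).symm_apply_apply v
      rw [this]
      exact hvu
  · obtain ⟨a, ha, b, hb, hab⟩ := hSnt
    exact ⟨C a, ⟨a, ha, rfl⟩, C b, ⟨b, hb, rfl⟩, fun hcontra => hab (C.injective hcontra)⟩
  · intro hcontra
    obtain ⟨z, hz⟩ : ∃ z, z ∉ S := by
      by_contra hall
      push_neg at hall
      exact hSne (Set.eq_univ_of_forall hall)
    have : C z ∈ C '' S := hcontra ▸ Set.mem_univ (C z)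
    obtain ⟨s, hsS, hsz⟩ := this
    exact hz (C.injective hsz ▸ hsS)
  · rintro _ ⟨x, hx, rfl⟩ _ ⟨y, hy, rfl⟩ _ ⟨z, hz, rfl⟩
    rw [key, key, key, key, p_assoc hx hy hz]
end

section
/- Let (G,⊕) be a Smarandache right Bol loop such that for all f,g ∈ G there exists a nontrivial right Bol subloop (S,⊕) of (G,⊕) with f,g ∈ S (i.e., all f,g-principal isotopes of (G,⊕) are Smarandache f,g-principal isotopes). Then (G,⊕) is universal: every loop isotopic to (G,⊕) is a Smarandache right Bol loop. (Theorem 1.6, forward direction, right Bol case) -/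
universe u

open LoopStr

variable {G : Type u}

/-- The subset `S` satisfies the right Bol identity
`((y⊕x)⊕z)⊕x = y⊕((x⊕z)⊕x)`. -/
def RightBolOn (M : LoopStr G) (S : Set G) : Prop :=
  ∀ x ∈ S, ∀ y ∈ S, ∀ z ∈ S,
    M.mul (M.mul (M.mul y x) z) x = M.mul y (M.mul (M.mul x z) x)

section Aux

variable {M : LoopStr G} {S : Set G}

lemma Rsymm_mem (hS : M.IsSubloop S) {a x : G} (ha : a ∈ S) (hx : x ∈ S) :
    (M.R a).symm x ∈ S := by
  obtain ⟨y, hy, hxy⟩ := (hS.right_bijOn ha).surjOn hx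
  have h : (M.R a) y = x := hxy
  rw [← h, Equiv.symm_apply_apply]
  exact hy

lemma Lsymm_mem (hS : M.IsSubloop S) {a x : G} (ha : a ∈ S) (hx : x ∈ S) :
    (M.L a).symm x ∈ S := by
  obtain ⟨y, hy, hxy⟩ := (hS.left_bijOn ha).surjOn hx
  have h : (M.L a) y = x := hxy
  rw [← h, Equiv.symm_apply_apply]
  exact hy

lemma rinv_mem (hS : M.IsSubloop S) {x : G} (hx : x ∈ S) : M.rinv x ∈ S :=
  Lsymm_mem hS hx hS.one_mem

lemma mul_rinv (M : LoopStr G) (x : G) : M.mul x (M.rinv x) = M.one :=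
  (M.L x).apply_symm_apply M.one

lemma rcancel (M : LoopStr G) {a u v : G} (h : M.mul u a = M.mul v a) : u = v :=
  (M.rightBij a).1 h

lemma rip (hS : M.IsSubloop S) (hB : RightBolOn M S) {x u : G} (hx : x ∈ S) (hu : u ∈ S) :
    M.mul (M.mul u x) (M.rinv x) = u := by
  have h := hB x hx u hu (M.rinv x) (rinv_mem hS hx)
  rw [mul_rinv, M.one_mul] at h
  exact rcancel M h

lemma rinv_rinv (hS : M.IsSubloop S) (hB : RightBolOn M S) {x : G} (hx : x ∈ S) :
    M.rinv (M.rinv x) = x := by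
  have h := rip hS hB (rinv_mem hS hx) hx
  rwa [mul_rinv, M.one_mul] at h

lemma Rsymm_eq (hS : M.IsSubloop S) (hB : RightBolOn M S) {g u : G}
    (hg : g ∈ S) (hu : u ∈ S) :
    (M.R g).symm u = M.mul u (M.rinv g) := by
  rw [Equiv.symm_apply_eq]
  have h := rip hS hB (rinv_mem hS hg) hu
  rw [rinv_rinv hS hB hg] at h
  exact h.symm

lemma pmul_mem (hS : M.IsSubloop S) {f g x y : G}
    (hf : f ∈ S) (hg : g ∈ S) (hx : x ∈ S) (hy : y ∈ S) :
    M.pMul f g x y ∈ S :=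
  hS.mul_mem (Rsymm_mem hS hg hx) (Lsymm_mem hS hf hy)

lemma symm_bijOn {e : G ≃ G} (h : Set.BijOn e S S) : Set.BijOn (⇑e.symm) S S :=
  Set.BijOn.symm ⟨fun x _ => e.apply_symm_apply x, fun y _ => e.symm_apply_apply y⟩ h

lemma pmul_left_bijOn (hS : M.IsSubloop S) {f g a : G}
    (hf : f ∈ S) (hg : g ∈ S) (ha : a ∈ S) :
    Set.BijOn (fun x => M.pMul f g a x) S S := by
  have h1 : Set.BijOn (fun t => M.mul ((M.R g).symm a) t) S S :=
    hS.left_bijOn (Rsymm_mem hS hg ha)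
  have h2 : Set.BijOn (⇑(M.L f).symm) S S := symm_bijOn (hS.left_bijOn hf)
  exact (h1.comp h2).congr fun x _ => rfl

lemma pmul_right_bijOn (hS : M.IsSubloop S) {f g a : G}
    (hf : f ∈ S) (hg : g ∈ S) (ha : a ∈ S) :
    Set.BijOn (fun x => M.pMul f g x a) S S := by
  have h1 : Set.BijOn (fun t => M.mul t ((M.L f).symm a)) S S :=
    hS.right_bijOn (Lsymm_mem hS hf ha)
  have h2 : Set.BijOn (⇑(M.R g).symm) S S := symm_bijOn (hS.right_bijOn hg)
  exact (h1.comp h2).congr fun x _ => rfl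

lemma pBol (hS : M.IsSubloop S) (hB : RightBolOn M S) {f g : G} (hf : f ∈ S) (hg : g ∈ S) :
    ∀ x ∈ S, ∀ y ∈ S, ∀ z ∈ S,
      M.pMul f g (M.pMul f g (M.pMul f g y x) z) x
        = M.pMul f g y (M.pMul f g (M.pMul f g x z) x) := by
  intro x hx y hy z hz
  have hp : M.rinv g ∈ S := rinv_mem hS hg
  have key : ∀ a, a ∈ S → ∀ b : G,
      M.pMul f g a b = M.mul (M.mul a (M.rinv g)) ((M.L f).symm b) := by
    intro a ha b
    show M.mul ((M.R g).symm a) ((M.L f).symm b) = _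
    rw [Rsymm_eq hS hB hg ha]
  have hX : (M.L f).symm x ∈ S := Lsymm_mem hS hf hx
  have hZ : (M.L f).symm z ∈ S := Lsymm_mem hS hf hz
  have hfx : M.mul f ((M.L f).symm x) = x := (M.L f).apply_symm_apply x
  have hc : M.mul (M.mul (M.rinv g) ((M.L f).symm z)) (M.rinv g) ∈ S :=
    hS.mul_mem (hS.mul_mem hp hZ) hp
  have h1 : M.pMul f g y x ∈ S := pmul_mem hS hf hg hy hx
  have h2 : M.pMul f g (M.pMul f g y x) z ∈ S := pmul_mem hS hf hg h1 hz
  have h3 : M.pMul f g x z ∈ S := pmul_mem hS hf hg hx hz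
  have hyp : M.mul y (M.rinv g) ∈ S := hS.mul_mem hy hp
  have hU : M.mul (M.mul y (M.rinv g)) ((M.L f).symm x) ∈ S := hS.mul_mem hyp hX
  have hw : (M.L f).symm
        (M.mul (M.mul (M.mul (M.mul x (M.rinv g)) ((M.L f).symm z)) (M.rinv g)) ((M.L f).symm x))
      = M.mul (M.mul ((M.L f).symm x)
          (M.mul (M.mul (M.rinv g) ((M.L f).symm z)) (M.rinv g))) ((M.L f).symm x) := by
    rw [Equiv.symm_apply_eq]
    show _ = M.mul f _
    rw [← hB ((M.L f).symm x) hX f hf _ hc, hfx, hB (M.rinv g) hp x hx ((M.L f).symm z) hZ]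
  rw [key _ h2, key _ h1, key _ hy, key _ h3, key _ hx, key _ hy, hw,
    ← hB ((M.L f).symm x) hX (M.mul y (M.rinv g)) hyp _ hc,
    ← hB (M.rinv g) hp (M.mul (M.mul y (M.rinv g)) ((M.L f).symm x)) hU ((M.L f).symm z) hZ]

end Aux

/-- A Smarandache right Bol loop `(G, ⊕)` such that for all `f, g ∈ G` there is a
nontrivial right Bol subloop containing `f` and `g` (i.e. all of whose
`f,g`-principal isotopes are Smarandache `f,g`-principal isotopes) is universal:
every loop isotopic to it is a Smarandache right Bol loop. -/
theorem smarandache_right_bol_universal (M : LoopStr G)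
    (hSm : ∃ S : Set G, M.IsSubloop S ∧ NontrivialSub S ∧ RightBolOn M S)
    (h : ∀ f g : G, ∃ S : Set G, M.IsSubloop S ∧ NontrivialSub S ∧ RightBolOn M S ∧ f ∈ S ∧ g ∈ S) :
    ∀ (H : Type u) (N : LoopStr H), M.Isotopic N →
      ∃ S : Set H, N.IsSubloop S ∧ NontrivialSub S ∧ RightBolOn N S := by
  rintro H N ⟨A, B, C, hiso⟩
  set f := A.symm N.one with hf_def
  set g := B.symm N.one with hg_def
  have hA : ∀ x, A x = C (M.mul x g) := by
    intro x
    have h := hiso x g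
    rw [show B g = N.one from B.apply_symm_apply _, N.mul_one] at h
    exact h
  have hBB : ∀ y, B y = C (M.mul f y) := by
    intro y
    have h := hiso f y
    rw [show A f = N.one from A.apply_symm_apply _, N.one_mul] at h
    exact h
  have hC : ∀ x y, N.mul (C x) (C y) = C (M.pMul f g x y) := by
    intro x y
    have h := hiso ((M.R g).symm x) ((M.L f).symm y)
    rw [hA, hBB,
      show M.mul ((M.R g).symm x) g = x from (M.R g).apply_symm_apply x,
      show M.mul f ((M.L f).symm y) = y from (M.L f).apply_symm_apply y] at h
    exact h
  have hCe : C (M.mul f g) = N.one := by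
    have h := hA f
    rw [show A f = N.one from A.apply_symm_apply _] at h
    exact h.symm
  obtain ⟨S, hS, hnt, hBol, hfS, hgS⟩ := h f g
  have hCbij : Set.BijOn (⇑C) S (C '' S) :=
    ⟨Set.mapsTo_image _ _, C.injective.injOn, Set.surjOn_image _ _⟩
  have hCsymm : Set.BijOn (⇑C.symm) (C '' S) S := by
    refine ⟨?_, C.symm.injective.injOn, ?_⟩
    · rintro _ ⟨x, hx, rfl⟩; simpa using hx
    · intro x hx; exact ⟨C x, ⟨x, hx, rfl⟩, C.symm_apply_apply x⟩
  refine ⟨C '' S, ⟨⟨M.mul f g, hS.mul_mem hfS hgS, hCe⟩, ?_, ?_, ?_⟩, ?_, ?_⟩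
  · rintro _ _ ⟨x, hx, rfl⟩ ⟨y, hy, rfl⟩
    exact ⟨M.pMul f g x y, pmul_mem hS hfS hgS hx hy, (hC x y).symm⟩
  · rintro _ ⟨a, ha, rfl⟩
    refine ((hCbij.comp (pmul_left_bijOn hS hfS hgS ha)).comp hCsymm).congr ?_
    rintro _ ⟨x, hx, rfl⟩
    show C (M.pMul f g a (C.symm (C x))) = N.mul (C a) (C x)
    rw [C.symm_apply_apply, hC]
  · rintro _ ⟨a, ha, rfl⟩
    refine ((hCbij.comp (pmul_right_bijOn hS hfS hgS ha)).comp hCsymm).congr ?_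
    rintro _ ⟨x, hx, rfl⟩
    show C (M.pMul f g (C.symm (C x)) a) = N.mul (C x) (C a)
    rw [C.symm_apply_apply, hC]
  · obtain ⟨⟨a, ha, b, hb, hab⟩, hne⟩ := hnt
    refine ⟨⟨C a, ⟨a, ha, rfl⟩, C b, ⟨b, hb, rfl⟩, fun hcc => hab (C.injective hcc)⟩, ?_⟩
    intro hT
    apply hne
    ext x
    simp only [Set.mem_univ, iff_true]
    have hx : C x ∈ C '' S := hT ▸ Set.mem_univ _
    obtain ⟨y, hy, hxy⟩ := hx
    rwa [← C.injective hxy]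
  · rintro _ ⟨x, hx, rfl⟩ _ ⟨y, hy, rfl⟩ _ ⟨z, hz, rfl⟩
    simp only [hC]
    exact congrArg C (pBol hS hBol hfS hgS x hx y hy z hz)
end

section
/- Let (G,⊕) be a loop with a nontrivial subloop (S,⊕), let f,g ∈ S, and suppose that the f,g-principal isotope (S,∘), defined by x∘y = (xR_g^{-1}) ⊕ (yL_f^{-1}) for x,y ∈ S, is a right Bol loop. Then T₁ = (R_g R_{f^ρ}^{-1}, L_{g^λ} R_g^{-1} R_{f^ρ} L_f^{-1}, R_g^{-1} R_{f^ρ}) is an autotopism of (S,⊕). (This is the content of the converse part of Theorem 1.6 for universal Smarandache right Bol loops.) -/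
universe u

open LoopStr

variable {G : Type u}

/-- If an equivalence restricts to a bijection of `S`, so does its inverse. -/
theorem symm_bijOn_of_bijOn (e : G ≃ G) {S : Set G} (h : Set.BijOn e S S) :
    Set.BijOn e.symm S S := by
  refine ⟨?_, (e.symm.injective).injOn, ?_⟩
  · intro s hs
    obtain ⟨t, ht, het⟩ := h.surjOn hs
    rw [← het, Equiv.symm_apply_apply]
    exact ht
  · intro s hs
    exact ⟨e s, h.mapsTo hs, e.symm_apply_apply s⟩

/-- **Theorem 1.6 (converse part, right Bol case).** If `(S, ⊕)` is a nontrivial subloop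
of a loop `(G, ⊕)`, `f, g ∈ S`, and the `f,g`-principal isotope `(S, ∘)` is a right
Bol loop, then `T₁ = (R_g R_(f^ρ)⁻¹, L_(g^λ) R_g⁻¹ R_(f^ρ) L_f⁻¹, R_g⁻¹ R_(f^ρ))` is
an autotopism of `(S, ⊕)`. -/
theorem autotopism_of_right_bol_isotope (M : LoopStr G) (S : Set G) (hS : M.IsSubloop S)
    (hnt : NontrivialSub S) {f g : G} (hf : f ∈ S) (hg : g ∈ S)
    (hiso : ∀ x ∈ S, ∀ y ∈ S, ∀ z ∈ S,
      M.pMul f g (M.pMul f g (M.pMul f g (y) (x)) (z)) (x) = M.pMul f g (y) (M.pMul f g (M.pMul f g (x) (z)) (x))) :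
    M.IsAutotopismOn S
      (fun x => (M.R (M.rinv f)).symm (M.R g (x)))
      (fun y => (M.L f).symm (M.R (M.rinv f) ((M.R g).symm (M.L (M.linv g) (y)))))
      (fun z => M.R (M.rinv f) ((M.R g).symm (z))) := by
  classical
  have h1 : M.one ∈ S := hS.one_mem
  -- bijectivity facts
  have hLf : Set.BijOn (M.L f) S S := hS.left_bijOn hf
  have hRg : Set.BijOn (M.R g) S S := hS.right_bijOn hg
  have hLfs : Set.BijOn (M.L f).symm S S := symm_bijOn_of_bijOn _ hLf
  have hRgs : Set.BijOn (M.R g).symm S S := symm_bijOn_of_bijOn _ hRg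
  have hfρ : M.rinv f ∈ S := hLfs.mapsTo h1
  have hgl : M.linv g ∈ S := hRgs.mapsTo h1
  have hRfρ : Set.BijOn (M.R (M.rinv f)) S S := hS.right_bijOn hfρ
  have hRfρs : Set.BijOn (M.R (M.rinv f)).symm S S := symm_bijOn_of_bijOn _ hRfρ
  have hLgl : Set.BijOn (M.L (M.linv g)) S S := hS.left_bijOn hgl
  refine ⟨hRfρs.comp hRg, hLfs.comp (hRfρ.comp (hRgs.comp hLgl)), hRfρ.comp hRgs, ?_⟩
  intro a ha b hb
  -- memberships for the instantiation of the Bol identity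
  have hUa : (M.R (M.rinv f)).symm (M.R g a) ∈ S := hRfρs.mapsTo (hRg.mapsTo ha)
  have hy : M.R g ((M.R (M.rinv f)).symm (M.R g a)) ∈ S := hRg.mapsTo hUa
  have hz : M.mul f b ∈ S := hS.mul_mem hf hb
  have key := hiso M.one h1 (M.R g ((M.R (M.rinv f)).symm (M.R g a))) hy (M.mul f b) hz
  -- pointwise simplification lemmas
  have e1 : ∀ v, (M.R g).symm (M.mul v g) = v := fun v => (M.R g).symm_apply_apply v
  have e2 : ∀ v, (M.L f).symm (M.mul f v) = v := fun v => (M.L f).symm_apply_apply v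
  have e4 : ∀ v, M.mul ((M.R ((M.L f).symm M.one)).symm v) ((M.L f).symm M.one) = v :=
    fun v => (M.R _).apply_symm_apply v
  simp only [pMul, LoopStr.rinv, LoopStr.linv, R_apply, L_apply,
    Equiv.symm_apply_apply, e1, e2, e4] at key ⊢
  exact key.symm
end

section
/- Let (G,⊕) be a Smarandache Moufang loop such that for all f,g ∈ G there exists a nontrivial Moufang subloop (S,⊕) of (G,⊕) with f,g ∈ S (i.e., all f,g-principal isotopes of (G,⊕) are Smarandache f,g-principal isotopes). Then (G,⊕) is universal: every loop isotopic to (G,⊕) is a Smarandache Moufang loop. (Theorem 1.7, forward direction) -/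
universe u

open LoopStr

variable {G : Type u}

/-- The subset `S` satisfies the Moufang identity
`(x⊕y)⊕(z⊕x) = (x⊕(y⊕z))⊕x`. -/
def MoufangOn (M : LoopStr G) (S : Set G) : Prop :=
  ∀ x ∈ S, ∀ y ∈ S, ∀ z ∈ S,
    M.mul (M.mul x y) (M.mul z x) = M.mul (M.mul x (M.mul y z)) x

namespace SMAux

open LoopStr

/-- The (middle) Moufang identity holds globally. -/
def Mouf (M : LoopStr G) : Prop :=
  ∀ x y z, M.mul (M.mul x y) (M.mul z x) = M.mul (M.mul x (M.mul y z)) x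

theorem left_cancel (M : LoopStr G) {a x y : G} (h : M.mul a x = M.mul a y) : x = y :=
  (M.leftBij a).1 h

theorem right_cancel (M : LoopStr G) {a x y : G} (h : M.mul x a = M.mul y a) : x = y :=
  (M.rightBij a).1 h

theorem mul_rinv (M : LoopStr G) (x : G) : M.mul x (M.rinv x) = M.one :=
  (M.L x).apply_symm_apply M.one

theorem R_symm_apply (M : LoopStr G) (g x : G) : M.mul ((M.R g).symm x) g = x :=
  (M.R g).apply_symm_apply x

theorem L_symm_apply (M : LoopStr G) (f y : G) : M.mul f ((M.L f).symm y) = y :=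
  (M.L f).apply_symm_apply y

theorem R_symm_eq (M : LoopStr G) {g x u : G} (h : M.mul u g = x) : (M.R g).symm x = u := by
  rw [Equiv.symm_apply_eq]
  simp [h.symm]

theorem L_symm_eq (M : LoopStr G) {f y u : G} (h : M.mul f u = y) : (M.L f).symm y = u := by
  rw [Equiv.symm_apply_eq]
  simp [h.symm]

section MoufangLemmas

variable (M : LoopStr G) (hm : Mouf M)
include hm

theorem flex (x y : G) : M.mul (M.mul x y) x = M.mul x (M.mul y x) := by
  have h := hm x M.one y
  rw [M.mul_one, M.one_mul] at h
  exact h.symm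

theorem lip (x z : G) : M.mul x (M.mul (M.rinv x) z) = z := by
  have h := hm x (M.rinv x) z
  rw [mul_rinv, M.one_mul] at h
  exact (right_cancel M h).symm

theorem rinv_mul (x : G) : M.mul (M.rinv x) x = M.one := by
  have h := lip M hm x x
  have h2 : M.mul x (M.mul (M.rinv x) x) = M.mul x M.one := by rw [h, M.mul_one]
  exact left_cancel M h2

theorem rinv_rinv (x : G) : M.rinv (M.rinv x) = x := by
  have h1 : M.mul (M.rinv x) (M.rinv (M.rinv x)) = M.mul (M.rinv x) x := by
    rw [mul_rinv, rinv_mul M hm]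
  exact left_cancel M h1

theorem lip' (x z : G) : M.mul (M.rinv x) (M.mul x z) = z := by
  have h := lip M hm (M.rinv x) z
  rwa [rinv_rinv M hm] at h

theorem rip (w x : G) : M.mul (M.mul w x) (M.rinv x) = w := by
  -- E0 : ∀ a b, M.mul a b = M.mul (M.mul a (M.mul b (M.rinv a))) a
  have E0 : ∀ a b : G, M.mul a b = M.mul (M.mul a (M.mul b (M.rinv a))) a := by
    intro a b
    have h := hm a b (M.rinv a)
    rwa [rinv_mul M hm, M.mul_one] at h
  have h1 := E0 (M.rinv x) (M.mul x w)
  rw [rinv_rinv M hm x, flex M hm x w, lip' M hm x w, lip' M hm x (M.mul w x)] at h1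
  exact h1.symm

theorem rip' (w x : G) : M.mul (M.mul w (M.rinv x)) x = w := by
  have h := rip M hm w (M.rinv x)
  rwa [rinv_rinv M hm] at h

theorem rinv_mul_rev (a b : G) :
    M.rinv (M.mul a b) = M.mul (M.rinv b) (M.rinv a) := by
  have h1 : M.mul b (M.rinv (M.mul a b)) = M.rinv a := by
    have h := rip M hm (M.rinv a) (M.mul a b)
    rwa [lip' M hm] at h
  have h2 := lip' M hm b (M.rinv (M.mul a b))
  rw [h1] at h2
  exact h2.symm

/-- The key right-translation autotopism identity `(p g⁻¹)((g z) g) = (p z) g`. -/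
theorem starstar (g p z : G) :
    M.mul (M.mul p (M.rinv g)) (M.mul (M.mul g z) g) = M.mul (M.mul p z) g := by
  have E : ∀ x w : G, M.mul (M.mul g x) (M.mul (M.mul (M.rinv x) w) g)
      = M.mul (M.mul g w) g := by
    intro x w
    have h := hm g x (M.mul (M.rinv x) w)
    rwa [lip M hm] at h
  have hE := E (M.rinv p) z
  rw [rinv_rinv M hm] at hE
  calc M.mul (M.mul p (M.rinv g)) (M.mul (M.mul g z) g)
      = M.mul (M.mul p (M.rinv g)) (M.mul (M.mul g (M.rinv p)) (M.mul (M.mul p z) g)) := by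
        rw [hE]
    _ = M.mul (M.rinv (M.mul g (M.rinv p))) (M.mul (M.mul g (M.rinv p)) (M.mul (M.mul p z) g)) := by
        rw [rinv_mul_rev M hm, rinv_rinv M hm]
    _ = M.mul (M.mul p z) g := lip' M hm _ _

/-- The key left-translation autotopism identity `((f p) f)(f⁻¹ q) = f (p q)`. -/
theorem diamond (f p q : G) :
    M.mul (M.mul (M.mul f p) f) (M.mul (M.rinv f) q) = M.mul f (M.mul p q) := by
  have E : ∀ x w : G, M.mul (M.mul f (M.mul w (M.rinv x))) (M.mul x f)
      = M.mul (M.mul f w) f := by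
    intro x w
    have h := hm f (M.mul w (M.rinv x)) x
    rwa [rip' M hm] at h
  have hE := E (M.rinv q) p
  rw [rinv_rinv M hm] at hE
  calc M.mul (M.mul (M.mul f p) f) (M.mul (M.rinv f) q)
      = M.mul (M.mul (M.mul f (M.mul p q)) (M.mul (M.rinv q) f)) (M.mul (M.rinv f) q) := by
        rw [hE]
    _ = M.mul (M.mul (M.mul f (M.mul p q)) (M.mul (M.rinv q) f))
          (M.rinv (M.mul (M.rinv q) f)) := by
        rw [rinv_mul_rev M hm, rinv_rinv M hm]
    _ = M.mul f (M.mul p q) := rip M hm _ _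

/-- Right Moufang identity `((u h) q) h = u ((h q) h)`. -/
theorem moufang2 (u h q : G) :
    M.mul (M.mul (M.mul u h) q) h = M.mul u (M.mul (M.mul h q) h) := by
  have hs := starstar M hm h (M.mul u h) q
  rw [rip M hm u h] at hs
  exact hs.symm

end MoufangLemmas

/-- The left isotope `x ⊛ y = x ⊕ (L_f⁻¹ y)`, a loop with identity `f`. -/
noncomputable def lIso (M : LoopStr G) (f : G) : LoopStr G where
  mul x y := M.mul x ((M.L f).symm y)
  one := f
  one_mul y := L_symm_apply M f y
  mul_one x := by
    show M.mul x ((M.L f).symm f) = x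
    rw [L_symm_eq M (M.mul_one f), M.mul_one]
  leftBij a := (M.leftBij a).comp (M.L f).symm.bijective
  rightBij a := M.rightBij ((M.L f).symm a)

/-- The right isotope `x ∘ y = (R_g⁻¹ x) ⊕ y`, a loop with identity `g`. -/
noncomputable def rIso (M : LoopStr G) (g : G) : LoopStr G where
  mul x y := M.mul ((M.R g).symm x) y
  one := g
  one_mul y := by
    show M.mul ((M.R g).symm g) y = y
    rw [R_symm_eq M (M.one_mul g), M.one_mul]
  mul_one x := R_symm_apply M g x
  leftBij a := M.leftBij ((M.R g).symm a)
  rightBij a := (M.rightBij a).comp (M.R g).symm.bijective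

theorem mouf_rIso {M : LoopStr G} (hm : Mouf M) (g : G) : Mouf (rIso M g) := by
  intro x p q
  have hsymm : ∀ x : G, (M.R g).symm x = M.mul x (M.rinv g) := fun x =>
    R_symm_eq M (rip' M hm x g)
  have hmul : ∀ a b : G, (rIso M g).mul a b = M.mul (M.mul a (M.rinv g)) b := by
    intro a b; show M.mul ((M.R g).symm a) b = _; rw [hsymm]
  show (rIso M g).mul ((rIso M g).mul x p) ((rIso M g).mul q x)
      = (rIso M g).mul ((rIso M g).mul x ((rIso M g).mul p q)) x
  rw [hmul, hmul, hmul, hmul, hmul, hmul]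
  obtain ⟨b, hbdef⟩ : ∃ b : G, M.mul x (M.rinv g) = b := ⟨_, rfl⟩
  obtain ⟨qb, hqbdef⟩ : ∃ qb : G, M.mul (M.rinv g) (M.mul q (M.rinv g)) = qb := ⟨_, rfl⟩
  have hb : M.mul b g = x := by rw [← hbdef]; exact rip' M hm x g
  have hq1 : M.mul g qb = M.mul q (M.rinv g) := by rw [← hqbdef]; exact lip M hm g _
  have hq : M.mul (M.mul g qb) g = q := by rw [hq1]; exact rip' M hm q g
  have hr1 : M.mul (M.mul p (M.rinv g)) q = M.mul (M.mul p qb) g := by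
    have hss := starstar M hm g p qb
    rwa [hq] at hss
  have hz0 : M.mul (M.mul g (M.mul (M.rinv g) b)) g = M.mul b g := by
    rw [lip M hm g b]
  rw [hbdef]
  rw [← hq1, ← hb]
  rw [hm g qb b]
  rw [starstar M hm g (M.mul b p) (M.mul qb b)]
  rw [hm b p qb]
  rw [hr1]
  rw [← hz0]
  rw [starstar M hm g (M.mul b (M.mul (M.mul p qb) g)) (M.mul (M.rinv g) b)]
  rw [hm b (M.mul (M.mul p qb) g) (M.rinv g)]
  rw [rip M hm (M.mul p qb) g]

theorem mouf_lIso {M : LoopStr G} (hm : Mouf M) (f : G) : Mouf (lIso M f) := by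
  intro x p q
  have hsymm : ∀ y : G, (M.L f).symm y = M.mul (M.rinv f) y := fun y =>
    L_symm_eq M (lip M hm f y)
  have hmul : ∀ a b : G, (lIso M f).mul a b = M.mul a (M.mul (M.rinv f) b) := by
    intro a b; show M.mul a ((M.L f).symm b) = _; rw [hsymm]
  show (lIso M f).mul ((lIso M f).mul x p) ((lIso M f).mul q x)
      = (lIso M f).mul ((lIso M f).mul x ((lIso M f).mul p q)) x
  rw [hmul, hmul, hmul, hmul, hmul, hmul]
  obtain ⟨c, hcdef⟩ : ∃ c : G, M.mul (M.rinv f) x = c := ⟨_, rfl⟩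
  obtain ⟨pb, hpbdef⟩ : ∃ pb : G, M.mul (M.mul (M.rinv f) p) (M.rinv f) = pb := ⟨_, rfl⟩
  have hc : M.mul f c = x := by rw [← hcdef]; exact lip M hm f x
  have hp1 : M.mul pb f = M.mul (M.rinv f) p := by rw [← hpbdef]; exact rip' M hm _ f
  have hp2 : M.mul (M.mul f pb) f = p := by
    rw [flex M hm f pb, hp1]; exact lip M hm f p
  have hr1 : M.mul p (M.mul (M.rinv f) q) = M.mul f (M.mul pb q) := by
    have hd := diamond M hm f pb q
    rwa [hp2] at hd
  rw [hcdef]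
  rw [← hp1, ← hc]
  rw [hm f c pb]
  rw [diamond M hm f (M.mul c pb) (M.mul q c)]
  rw [hm c pb q]
  rw [hr1]
  rw [lip' M hm f (M.mul pb q)]
  rw [moufang2 M hm f c (M.mul pb q)]

/-- The `f,g`-principal isotope is the `f⊕g` right isotope of the `f` left isotope. -/
theorem pMul_eq (M : LoopStr G) (f g x y : G) :
    M.pMul f g x y = (rIso (lIso M f) (M.mul f g)).mul x y := by
  have h1 : ((lIso M f).R (M.mul f g)).symm x = (M.R g).symm x := by
    rw [Equiv.symm_apply_eq]
    show x = (lIso M f).mul ((M.R g).symm x) (M.mul f g)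
    show x = M.mul ((M.R g).symm x) ((M.L f).symm (M.mul f g))
    rw [L_symm_eq M rfl, R_symm_apply]
  show M.mul ((M.R g).symm x) ((M.L f).symm y)
      = (lIso M f).mul (((lIso M f).R (M.mul f g)).symm x) y
  rw [h1]
  rfl

theorem mouf_pMul {M : LoopStr G} (hm : Mouf M) (f g : G) (x y z : G) :
    M.pMul f g (M.pMul f g x y) (M.pMul f g z x)
      = M.pMul f g (M.pMul f g x (M.pMul f g y z)) x := by
  have key := mouf_rIso (mouf_lIso hm f) (M.mul f g) x y z
  simpa only [pMul_eq] using key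

/-- The loop structure induced on a subloop. -/
noncomputable def restrict (M : LoopStr G) {S : Set G} (hS : M.IsSubloop S) :
    LoopStr S where
  mul x y := ⟨M.mul x y, hS.mul_mem x.2 y.2⟩
  one := ⟨M.one, hS.one_mem⟩
  one_mul x := Subtype.ext (M.one_mul x)
  mul_one x := Subtype.ext (M.mul_one x)
  leftBij a := by
    constructor
    · intro x y hxy
      exact Subtype.ext ((M.leftBij a).1 (congrArg Subtype.val hxy))
    · intro y
      obtain ⟨x, hx, hxy⟩ := (hS.left_bijOn a.2).surjOn y.2
      exact ⟨⟨x, hx⟩, Subtype.ext hxy⟩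
  rightBij a := by
    constructor
    · intro x y hxy
      exact Subtype.ext ((M.rightBij a).1 (congrArg Subtype.val hxy))
    · intro y
      obtain ⟨x, hx, hxy⟩ := (hS.right_bijOn a.2).surjOn y.2
      exact ⟨⟨x, hx⟩, Subtype.ext hxy⟩

theorem restrict_pMul_val (M : LoopStr G) {S : Set G} (hS : M.IsSubloop S)
    (f g x y : S) :
    (((restrict M hS).pMul f g x y : S) : G) = M.pMul (f : G) (g : G) (x : G) (y : G) := by
  have hR : ((((restrict M hS).R g).symm x : S) : G) = (M.R (g : G)).symm (x : G) := by
    have h2 : M.mul ((((restrict M hS).R g).symm x : S) : G) (g : G) = (x : G) :=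
      congrArg (Subtype.val) (((restrict M hS).R g).apply_symm_apply x)
    have h3 : M.mul ((M.R (g : G)).symm (x : G)) (g : G) = (x : G) := R_symm_apply M _ _
    exact (M.rightBij (g : G)).1 (h2.trans h3.symm)
  have hL : ((((restrict M hS).L f).symm y : S) : G) = (M.L (f : G)).symm (y : G) := by
    have h2 : M.mul (f : G) ((((restrict M hS).L f).symm y : S) : G) = (y : G) :=
      congrArg (Subtype.val) (((restrict M hS).L f).apply_symm_apply y)
    have h3 : M.mul (f : G) ((M.L (f : G)).symm (y : G)) = (y : G) := L_symm_apply M _ _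
    exact (M.leftBij (f : G)).1 (h2.trans h3.symm)
  show M.mul ((((restrict M hS).R g).symm x : S) : G) ((((restrict M hS).L f).symm y : S) : G)
      = M.mul ((M.R (g : G)).symm (x : G)) ((M.L (f : G)).symm (y : G))
  rw [hR, hL]

end SMAux

/-- A Smarandache Moufang loop `(G, ⊕)` such that for all `f, g ∈ G` there is a
nontrivial Moufang subloop containing `f` and `g` (i.e. all of whose
`f,g`-principal isotopes are Smarandache `f,g`-principal isotopes) is universal:
every loop isotopic to it is a Smarandache Moufang loop. -/
theorem smarandache_moufang_universal (M : LoopStr G)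
    (hSm : ∃ S : Set G, M.IsSubloop S ∧ NontrivialSub S ∧ MoufangOn M S)
    (h : ∀ f g : G, ∃ S : Set G, M.IsSubloop S ∧ NontrivialSub S ∧ MoufangOn M S ∧ f ∈ S ∧ g ∈ S) :
    ∀ (H : Type u) (N : LoopStr H), M.Isotopic N →
      ∃ S : Set H, N.IsSubloop S ∧ NontrivialSub S ∧ MoufangOn N S := by
  intro H N hiso
  obtain ⟨A, B, C, hiso⟩ := hiso
  set f := A.symm N.one with hfdef
  set g := B.symm N.one with hgdef
  obtain ⟨S, hS, hnt, hmo, hfS, hgS⟩ := h f g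
  -- the isotopy is, via `C`, an isomorphism with the f,g-principal isotope
  have hA : ∀ x : G, A.symm (C x) = (M.R g).symm x := by
    intro x
    have h1 : C (M.mul (A.symm (C x)) g) = C x := by
      rw [← hiso, hgdef, Equiv.apply_symm_apply, Equiv.apply_symm_apply, N.mul_one]
    have h2 : M.mul (A.symm (C x)) g = x := C.injective h1
    exact (SMAux.R_symm_eq M h2).symm
  have hB : ∀ y : G, B.symm (C y) = (M.L f).symm y := by
    intro y
    have h1 : C (M.mul f (B.symm (C y))) = C y := by
      rw [← hiso, hfdef, Equiv.apply_symm_apply, Equiv.apply_symm_apply, N.one_mul]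
    have h2 : M.mul f (B.symm (C y)) = y := C.injective h1
    exact (SMAux.L_symm_eq M h2).symm
  have hkey : ∀ x y : G, N.mul (C x) (C y) = C (M.pMul f g x y) := by
    intro x y
    have h1 := hiso (A.symm (C x)) (B.symm (C y))
    rw [Equiv.apply_symm_apply, Equiv.apply_symm_apply, hA, hB] at h1
    exact h1
  -- membership helpers
  have hRsymmS : ∀ {x : G}, x ∈ S → (M.R g).symm x ∈ S := by
    intro x hx
    obtain ⟨u, hu, hux⟩ := (hS.right_bijOn hgS).surjOn hx
    have hux' : M.mul u g = x := hux
    rw [SMAux.R_symm_eq M hux']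
    exact hu
  have hLsymmS : ∀ {y : G}, y ∈ S → (M.L f).symm y ∈ S := by
    intro y hy
    obtain ⟨u, hu, huy⟩ := (hS.left_bijOn hfS).surjOn hy
    have huy' : M.mul f u = y := huy
    rw [SMAux.L_symm_eq M huy']
    exact hu
  have pmem : ∀ {x y : G}, x ∈ S → y ∈ S → M.pMul f g x y ∈ S := by
    intro x y hx hy
    exact hS.mul_mem (hRsymmS hx) (hLsymmS hy)
  -- the principal isotope is Moufang on S
  have hmoS : SMAux.Mouf (SMAux.restrict M hS) := by
    intro x y z
    exact Subtype.ext (hmo x x.2 y y.2 z z.2)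
  have pM3 : ∀ {x y z : G}, x ∈ S → y ∈ S → z ∈ S →
      M.pMul f g (M.pMul f g x y) (M.pMul f g z x)
        = M.pMul f g (M.pMul f g x (M.pMul f g y z)) x := by
    intro x y z hx hy hz
    have key := SMAux.mouf_pMul hmoS ⟨f, hfS⟩ ⟨g, hgS⟩ ⟨x, hx⟩ ⟨y, hy⟩ ⟨z, hz⟩
    have kv := congrArg Subtype.val key
    simp only [SMAux.restrict_pMul_val] at kv
    exact kv
  -- bijection helpers
  have hLsymmBij : Set.BijOn (fun t => (M.L f).symm t) S S := by
    refine ⟨fun t ht => hLsymmS ht, (M.L f).symm.injective.injOn, ?_⟩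
    intro t ht
    exact ⟨M.mul f t, hS.mul_mem hfS ht, SMAux.L_symm_eq M rfl⟩
  have hRsymmBij : Set.BijOn (fun t => (M.R g).symm t) S S := by
    refine ⟨fun t ht => hRsymmS ht, (M.R g).symm.injective.injOn, ?_⟩
    intro t ht
    exact ⟨M.mul t g, hS.mul_mem ht hgS, SMAux.R_symm_eq M rfl⟩
  have hCS : Set.BijOn (⇑C) S (C '' S) :=
    ⟨fun x hx => ⟨x, hx, rfl⟩, C.injective.injOn, fun t ht => ht⟩
  have hCsymm : Set.BijOn (⇑C.symm) (C '' S) S := by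
    refine ⟨?_, C.symm.injective.injOn, ?_⟩
    · rintro _ ⟨x, hx, rfl⟩
      simpa using hx
    · intro x hx
      exact ⟨C x, ⟨x, hx, rfl⟩, by simp⟩
  refine ⟨C '' S, ⟨?_, ?_, ?_, ?_⟩, ⟨?_, ?_⟩, ?_⟩
  · -- identity
    have he : N.one = C (M.mul f g) := by
      have h1 : N.mul (C (M.mul f g)) (C (M.mul f g)) = C (M.mul f g) := by
        rw [hkey]
        congr 1
        show M.mul ((M.R g).symm (M.mul f g)) ((M.L f).symm (M.mul f g)) = M.mul f g
        rw [SMAux.R_symm_eq M rfl, SMAux.L_symm_eq M rfl]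
      have h2 : N.mul (C (M.mul f g)) (C (M.mul f g)) = N.mul (C (M.mul f g)) N.one := by
        rw [h1, N.mul_one]
      exact (SMAux.left_cancel N h2).symm
    exact ⟨M.mul f g, hS.mul_mem hfS hgS, he.symm⟩
  · -- closure
    intro x y hx hy
    obtain ⟨x0, hx0, rfl⟩ := hx
    obtain ⟨y0, hy0, rfl⟩ := hy
    rw [hkey]
    exact ⟨M.pMul f g x0 y0, pmem hx0 hy0, rfl⟩
  · -- left translations
    intro a ha
    obtain ⟨a0, ha0, rfl⟩ := ha
    have hψ : Set.BijOn (fun t => M.pMul f g a0 t) S S :=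
      (hS.left_bijOn (hRsymmS ha0)).comp hLsymmBij
    have hcomp := (hCS.comp hψ).comp hCsymm
    refine hcomp.congr ?_
    rintro _ ⟨x0, hx0, rfl⟩
    show C ((fun t => M.pMul f g a0 t) (C.symm (C x0))) = N.mul (C a0) (C x0)
    rw [Equiv.symm_apply_apply, hkey]
  · -- right translations
    intro a ha
    obtain ⟨a0, ha0, rfl⟩ := ha
    have hψ : Set.BijOn (fun t => M.pMul f g t a0) S S :=
      (hS.right_bijOn (hLsymmS ha0)).comp hRsymmBij
    have hcomp := (hCS.comp hψ).comp hCsymm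
    refine hcomp.congr ?_
    rintro _ ⟨x0, hx0, rfl⟩
    show C ((fun t => M.pMul f g t a0) (C.symm (C x0))) = N.mul (C x0) (C a0)
    rw [Equiv.symm_apply_apply, hkey]
  · -- nontrivial
    obtain ⟨a, ha, b, hb, hab⟩ := hnt.1
    exact ⟨C a, ⟨a, ha, rfl⟩, C b, ⟨b, hb, rfl⟩, fun hCab => hab (C.injective hCab)⟩
  · -- proper
    intro huniv
    obtain ⟨u, hu⟩ : ∃ u, u ∉ S := by
      by_contra hc
      push_neg at hc
      exact hnt.2 (Set.eq_univ_of_forall hc)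
    have hmem : C u ∈ C '' S := by rw [huniv]; trivial
    obtain ⟨v, hv, hvu⟩ := hmem
    exact hu (C.injective hvu ▸ hv)
  · -- Moufang identity
    rintro _ ⟨x, hx, rfl⟩ _ ⟨y, hy, rfl⟩ _ ⟨z, hz, rfl⟩
    simp only [hkey]
    exact congrArg C (pM3 hx hy hz)
end
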